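/- arXiv:1502.06845 — 2 statements merged into one kernel-verified Lean document; each statement's English description precedes it below -/
import Mathlib

section
/- Fix an integer n ≥ 2 and let q = exp(πi/n) ∈ ℂ. Let (a,b,c) be an admissible triple of natural numbers with a, b, c ≤ n−2. Then the Kauffman–Lins theta value θ(a,b,c) (whose denominator [a]![b]![c]! is nonzero since a,b,c ≤ n−2 < n) is zero if and only if a+b+c ≥ 2n−2. -/
/-!
Since `q = exp(πi/n)` is a primitive `2n`-th root of unity, `[m] = 0` iff `q^{2m} = 1` iff
`n ∣ m`, so `[s]! = 0` iff `s ≥ n`. For `a, b, c ≤ n - 2` the denominator `[a]![b]![c]!` of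
`θ(a,b,c)` is nonzero, and the only factorial in the numerator that can reach `n` is
`[x+y+z+1]! = [(a+b+c)/2 + 1]!`.
-/

/-- The root of unity `q = exp(πi/n)`. -/
noncomputable def qRoot (n : ℕ) : ℂ := Complex.exp (Real.pi * Complex.I / n)

/-- The `m`-th quantum integer `[m] = (q^m − q^{−m})/(q − q^{−1})` at `q = exp(πi/n)`. -/
noncomputable def qInt (n : ℕ) (m : ℤ) : ℂ :=
  (qRoot n ^ m - qRoot n ^ (-m)) / (qRoot n - (qRoot n)⁻¹)

/-- The quantum factorial `[s]! = ∏_{j=1}^{s} [j]` at `q = exp(πi/n)`. -/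
noncomputable def qFact (n s : ℕ) : ℂ := ∏ j ∈ Finset.Icc 1 s, qInt n j

/-- A triple `(a,b,c)` of natural numbers is admissible if `a+b+c` is even and
`a+b ≥ c`, `b+c ≥ a`, `a+c ≥ b`. -/
def Admissible (a b c : ℕ) : Prop :=
  Even (a + b + c) ∧ c ≤ a + b ∧ a ≤ b + c ∧ b ≤ a + c

/-- The Kauffman–Lins theta value `θ(a,b,c)` at `q = exp(πi/n)`:
`θ(a,b,c) = [x]![y]![z]![x+y+z+1]! / ([x+y]![y+z]![x+z]!)` with
`x = (a+b−c)/2`, `y = (b+c−a)/2`, `z = (a+c−b)/2`. -/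
noncomputable def thetaNet (n a b c : ℕ) : ℂ :=
  qFact n ((a + b - c) / 2) * qFact n ((b + c - a) / 2) * qFact n ((a + c - b) / 2) *
      qFact n ((a + b - c) / 2 + (b + c - a) / 2 + (a + c - b) / 2 + 1) /
    (qFact n ((a + b - c) / 2 + (b + c - a) / 2) *
      qFact n ((b + c - a) / 2 + (a + c - b) / 2) *
      qFact n ((a + b - c) / 2 + (a + c - b) / 2))

theorem IsPrimitiveRoot.zpow_eq_zpow_neg_iff {G₀ : Type*} [CommGroupWithZero G₀] {ζ : G₀}
    {k : ℕ} (h : IsPrimitiveRoot ζ k) (hk : k ≠ 0) (m : ℤ) :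
    ζ ^ m = ζ ^ (-m) ↔ (k : ℤ) ∣ 2 * m := by
  have hζ : ζ ≠ 0 := h.ne_zero hk
  rw [← h.zpow_eq_one_iff_dvd, two_mul, zpow_add₀ hζ, zpow_neg,
    mul_eq_one_iff_eq_inv₀ (zpow_ne_zero m hζ)]

theorem qRoot_isPrimitiveRoot {n : ℕ} (hn : n ≠ 0) : IsPrimitiveRoot (qRoot n) (2 * n) := by
  convert Complex.isPrimitiveRoot_exp (2 * n) (by omega) using 1
  rw [qRoot]
  congr 1
  push_cast
  field_simp

theorem qRoot_sub_inv_ne_zero {n : ℕ} (hn : 2 ≤ n) : qRoot n - (qRoot n)⁻¹ ≠ 0 := by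
  intro h
  have hdvd : ((2 * n : ℕ) : ℤ) ∣ 2 * 1 := by
    rw [← (qRoot_isPrimitiveRoot (by omega)).zpow_eq_zpow_neg_iff (by omega), zpow_one,
      zpow_neg_one]
    exact sub_eq_zero.mp h
  have := Int.le_of_dvd two_pos hdvd
  omega

theorem qInt_eq_zero_iff {n : ℕ} (hn : 2 ≤ n) (m : ℤ) : qInt n m = 0 ↔ (n : ℤ) ∣ m := by
  rw [qInt, div_eq_zero_iff, or_iff_left (qRoot_sub_inv_ne_zero hn), sub_eq_zero,
    (qRoot_isPrimitiveRoot (by omega)).zpow_eq_zpow_neg_iff (by omega), Nat.cast_mul,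
    Nat.cast_two, mul_dvd_mul_iff_left two_ne_zero]

theorem qFact_eq_zero_iff {n : ℕ} (hn : 2 ≤ n) (s : ℕ) : qFact n s = 0 ↔ n ≤ s := by
  simp only [qFact, Finset.prod_eq_zero_iff, Finset.mem_Icc, qInt_eq_zero_iff hn,
    Int.natCast_dvd_natCast]
  constructor
  · rintro ⟨j, ⟨hj, hjs⟩, hnj⟩
    exact (Nat.le_of_dvd hj hnj).trans hjs
  · exact fun hns => ⟨n, ⟨by omega, hns⟩, dvd_rfl⟩

/-- At `q = exp(πi/n)` with `n ≥ 2`, for an admissible triple `(a,b,c)` with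
`a,b,c ≤ n−2`, the theta value `θ(a,b,c)` is zero iff `a+b+c ≥ 2n−2`. -/
theorem thetaNet_eq_zero_iff (n : ℕ) (hn : 2 ≤ n) (a b c : ℕ)
    (hadm : Admissible a b c) (ha : a ≤ n - 2) (hb : b ≤ n - 2) (hc : c ≤ n - 2) :
    thetaNet n a b c = 0 ↔ 2 * n - 2 ≤ a + b + c := by
  obtain ⟨⟨r, hr⟩, hc_le, ha_le, hb_le⟩ := hadm
  simp only [thetaNet, div_eq_zero_iff, mul_eq_zero, qFact_eq_zero_iff hn]
  omega
end

section
/- Fix an integer n ≥ 2 and let a, b be natural numbers with a ≤ n−2 and b ≤ n−2. Define a ⊕_n b := a+b if a+b < n−1, and a ⊕_n b := 2n − (a+b) − 4 if a+b ≥ n−1. Then: (i) a ⊕_n b ≤ n−2; (ii) |a−b| ≤ a ⊕_n b and (a ⊕_n b) − |a−b| is even; and (iii) for every natural number k with |a−b| ≤ k ≤ a ⊕_n b and k ≡ |a−b| (mod 2), the triple (a, b, k) is q-admissible, i.e. admissible, with a, b, k ≤ n−2 and a+b+k < 2n−2. -/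
/-- A triple is `q`-admissible (`q` a primitive `2n`-th root of unity) if it is
admissible, all entries are `≤ n−2`, and the sum is `< 2n−2`. -/
def QAdmissible (n a b c : ℕ) : Prop :=
  Admissible a b c ∧ a ≤ n - 2 ∧ b ≤ n - 2 ∧ c ≤ n - 2 ∧ a + b + c < 2 * n - 2

/-- The truncated sum `a ⊕_n b`. -/
def truncAdd (n a b : ℕ) : ℕ :=
  if a + b < n - 1 then a + b else 2 * n - (a + b) - 4

/-- For `n ≥ 2` and `a, b ≤ n−2`: (i) `a ⊕_n b ≤ n−2`; (ii) `|a−b| ≤ a ⊕_n b` and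
`(a ⊕_n b) − |a−b|` is even; and (iii) every `k` with `|a−b| ≤ k ≤ a ⊕_n b` and
`k ≡ |a−b| (mod 2)` gives a `q`-admissible triple `(a,b,k)`. -/
theorem truncAdd_properties (n : ℕ) (hn : 2 ≤ n) (a b : ℕ)
    (ha : a ≤ n - 2) (hb : b ≤ n - 2) :
    truncAdd n a b ≤ n - 2 ∧
    (((a : ℤ) - b).natAbs ≤ truncAdd n a b ∧
      Even (truncAdd n a b - ((a : ℤ) - b).natAbs)) ∧
    ∀ k : ℕ, ((a : ℤ) - b).natAbs ≤ k → k ≤ truncAdd n a b →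
      k % 2 = ((a : ℤ) - b).natAbs % 2 → QAdmissible n a b k := by
  have hd : ((a : ℤ) - b).natAbs = a - b ∨ ((a : ℤ) - b).natAbs = b - a := by
    rcases le_total a b with h | h
    · right; omega
    · left; omega
  have ht : (truncAdd n a b = a + b ∧ a + b < n - 1) ∨
      (truncAdd n a b = 2 * n - (a + b) - 4 ∧ n - 1 ≤ a + b) := by
    unfold truncAdd
    split <;> [left; right] <;> omega
  refine ⟨by omega, ⟨by omega, ?_⟩, ?_⟩
  · rw [Nat.even_sub (by omega), Nat.even_iff, Nat.even_iff]; omega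
  · intro k hk1 hk2 hk3
    refine ⟨⟨?_, by omega, by omega, by omega⟩, ha, hb, by omega, by omega⟩
    rw [Nat.even_iff]; omega
end
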